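/- Let G be a graph and H an induced subgraph of finite adhesion in G, with dominated torso K. The K-projection S′ of any tendril S in G is a locally finite tour in K: an infinite walk in K visiting each vertex only finitely many times. -/

import Mathlib

/-!
Consecutive terms of the projection are adjacent in `K`: between two kept indices the ray
either takes a single edge, or leaves or enters a run through some `D ∈ 𝒟′` (and `v_D` is
adjacent to all of `N_G(D)`), or makes an excursion through some `D ∈ 𝒟″` between two vertices
of `N_G(D)`, which form a clique in `K`. A vertex of `H` is visited at most once, and every run
through `D ∈ 𝒟′` not starting at index `0` is entered from a vertex of the finite set `N_G(D)`,
each of which the ray visits at most once.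
-/

/-- A ray in `G`: a one-way infinite path. -/
def IsRay {V : Type*} (G : SimpleGraph V) (f : ℕ → V) : Prop :=
  Function.Injective f ∧ ∀ n, G.Adj (f n) (f (n + 1))

/-- `F` separates `U` from `S` in `G`: every path (walk) from a vertex of `U`
to a vertex of `S` meets `F`. -/
def Separates {V : Type*} (G : SimpleGraph V) (F U S : Set V) : Prop :=
  ∀ u ∈ U, ∀ s ∈ S, ∀ p : G.Walk u s, ∃ x ∈ p.support, x ∈ F

/-- `U` is dispersed in `G`: every ray can be separated from `U` by a finite vertex set. -/
def Dispersed {V : Type*} (G : SimpleGraph V) (U : Set V) : Prop :=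
  ∀ f : ℕ → V, IsRay G f → ∃ F : Set V, F.Finite ∧ Separates G F U (Set.range f)

/-- `v` is reachable from `u` by a walk avoiding `H` entirely. -/
def ReachOutside {V : Type*} (G : SimpleGraph V) (H : Set V) (u v : V) : Prop :=
  ∃ p : G.Walk u v, ∀ x ∈ p.support, x ∉ H

/-- `D` is a connected component of `G − H` (the induced subgraph on `V(G) \ H`). -/
def IsComp {V : Type*} (G : SimpleGraph V) (H D : Set V) : Prop :=
  D.Nonempty ∧ ∀ u ∈ D, ∀ v : V, (v ∈ D ↔ v ∉ H ∧ ReachOutside G H u v)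

/-- The neighborhood `N_G(D)`: vertices outside `D` adjacent in `G` to a vertex of `D`. -/
def nbhdOf {V : Type*} (G : SimpleGraph V) (D : Set V) : Set V :=
  {v | v ∉ D ∧ ∃ d ∈ D, G.Adj v d}

/-- `H` has finite adhesion in `G`: every component of `G − H` has finite neighborhood. -/
def FiniteAdhesion {V : Type*} (G : SimpleGraph V) (H : Set V) : Prop :=
  ∀ D : Set V, IsComp G H D → (nbhdOf G D).Finite

/-- The component of `G − H` containing `u` (for `u ∉ H`). -/
def compOf {V : Type*} (G : SimpleGraph V) (H : Set V) (u : V) : Set V :=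
  {v | v ∉ H ∧ ReachOutside G H u v}

/-- `𝒟′`: components of `G − H` whose adhesion set is shared by only finitely
many components. -/
def Dfin {V : Type*} (G : SimpleGraph V) (H : Set V) : Set (Set V) :=
  {D | IsComp G H D ∧ {D' | IsComp G H D' ∧ nbhdOf G D' = nbhdOf G D}.Finite}

/-- `𝒟″`: components of `G − H` whose adhesion set is shared by infinitely
many components. -/
def Dinf {V : Type*} (G : SimpleGraph V) (H : Set V) : Set (Set V) :=
  {D | IsComp G H D ∧ ¬ {D' | IsComp G H D' ∧ nbhdOf G D' = nbhdOf G D}.Finite}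

/-- `η` is an admissible contraction map: each `D ∈ 𝒟″` is contracted onto a vertex
`η D ∈ N_G(D)`, and for every `D ∈ 𝒟″` the map `η` restricted to the components
sharing the adhesion set `N_G(D)` surjects onto `N_G(D)`. -/
def EtaOK {V : Type*} (G : SimpleGraph V) (H : Set V) (η : Set V → V) : Prop :=
  (∀ D ∈ Dinf G H, η D ∈ nbhdOf G D) ∧
  (∀ D ∈ Dinf G H, ∀ a ∈ nbhdOf G D,
    ∃ D' ∈ Dinf G H, nbhdOf G D' = nbhdOf G D ∧ η D' = a)

open Classical in
/-- The contraction map `ρ` onto the vertex set of the dominated torso: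
vertices of `H` are kept, each `D ∈ 𝒟′` is contracted to the new vertex
`Sum.inr D`, and each `D ∈ 𝒟″` is contracted onto `η D ∈ N_G(D)`. -/
noncomputable def rho {V : Type*} (G : SimpleGraph V) (H : Set V) (η : Set V → V) :
    V → V ⊕ Set V := fun u =>
  if u ∈ H then Sum.inl u
  else if compOf G H u ∈ Dfin G H then Sum.inr (compOf G H u)
  else Sum.inl (η (compOf G H u))

/-- The dominated torso `K` of `H` in `G`: the contraction minor of `G`
witnessed by `ρ`. -/
noncomputable def Torso {V : Type*} (G : SimpleGraph V) (H : Set V) (η : Set V → V) :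
    SimpleGraph (V ⊕ Set V) where
  Adj a b := a ≠ b ∧ ∃ u v : V, rho G H η u = a ∧ rho G H η v = b ∧ G.Adj u v
  symm := by
    constructor
    rintro a b ⟨hne, u, v, hu, hv, huv⟩
    exact ⟨hne.symm, v, u, hv, hu, huv.symm⟩
  loopless := by constructor; rintro a ⟨hne, -⟩; exact hne rfl

/-- The vertex set of the dominated torso. -/
def torsoVerts {V : Type*} (G : SimpleGraph V) (H : Set V) : Set (V ⊕ Set V) :=
  Sum.inl '' H ∪ Sum.inr '' Dfin G H

/-- A tendril in `G`: a ray with infinitely many vertices in `H`. -/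
def IsTendril {V : Type*} (G : SimpleGraph V) (H : Set V) (f : ℕ → V) : Prop :=
  IsRay G f ∧ {n | f n ∈ H}.Infinite

open Classical in
/-- The `H`-masking of a sequence: vertices outside `H` are replaced by their
component of `G − H`. -/
noncomputable def mask {V : Type*} (G : SimpleGraph V) (H : Set V) : V → V ⊕ Set V :=
  fun u => if u ∈ H then Sum.inl u else Sum.inr (compOf G H u)

/-- The indices of a ray kept by the `K`-projection: vertices of `H`, and the
first index of each maximal run of a component `D ∈ 𝒟′`. -/
def keepIdx {V : Type*} (G : SimpleGraph V) (H : Set V) (f : ℕ → V) (n : ℕ) : Prop :=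
  f n ∈ H ∨
    (f n ∉ H ∧ compOf G H (f n) ∈ Dfin G H ∧
      (n = 0 ∨ mask G H (f (n - 1)) ≠ mask G H (f n)))

/-- The `K`-projection of a tendril: maximal runs of a component `D ∈ 𝒟′` are
replaced by the single vertex `v_D`, and terms in components of `𝒟″` are removed. -/
noncomputable def rayProj {V : Type*} (G : SimpleGraph V) (H : Set V) (η : Set V → V)
    (f : ℕ → V) : ℕ → V ⊕ Set V :=
  fun m => rho G H η (f (Nat.nth (keepIdx G H f) m))

/-- `D̂′`: components of `𝒟′` whose contracted vertex lies in `F`. -/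
def DhatFin {V : Type*} (G : SimpleGraph V) (H : Set V) (F : Set (V ⊕ Set V)) :
    Set (Set V) :=
  {D | D ∈ Dfin G H ∧ Sum.inr D ∈ F}

/-- `D̂″`: components `D ∈ 𝒟″` such that some term of the `H`-masking of the
tendril equals `D` and the next vertex of the tendril lies in `F`. -/
def DhatInf {V : Type*} (G : SimpleGraph V) (H : Set V) (f : ℕ → V)
    (F : Set (V ⊕ Set V)) : Set (Set V) :=
  {D | D ∈ Dinf G H ∧ ∃ n : ℕ, f n ∉ H ∧ compOf G H (f n) = D ∧ Sum.inl (f (n + 1)) ∈ F}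

/-- The `S`-modification `F_S` of a set `F ⊆ V(K)`. -/
def Smod {V : Type*} (G : SimpleGraph V) (H : Set V) (f : ℕ → V)
    (F : Set (V ⊕ Set V)) : Set V :=
  (Sum.inl ⁻¹' F ∩ H) ∪ ⋃ D ∈ DhatFin G H F ∪ DhatInf G H f F, nbhdOf G D

section

variable {V : Type*} {G : SimpleGraph V} {H : Set V}

namespace ReachOutside

theorem refl {u : V} (hu : u ∉ H) : ReachOutside G H u u :=
  ⟨.nil, by simpa using hu⟩

theorem symm {u v : V} (h : ReachOutside G H u v) : ReachOutside G H v u := by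
  obtain ⟨p, hp⟩ := h
  exact ⟨p.reverse, fun x hx => hp x (by simpa using hx)⟩

theorem trans {u v w : V} (h₁ : ReachOutside G H u v) (h₂ : ReachOutside G H v w) :
    ReachOutside G H u w := by
  obtain ⟨p, hp⟩ := h₁
  obtain ⟨q, hq⟩ := h₂
  refine ⟨p.append q, fun x hx => ?_⟩
  rcases (SimpleGraph.Walk.mem_support_append_iff p q).1 hx with h | h
  exacts [hp x h, hq x h]

theorem of_adj {u v : V} (hu : u ∉ H) (hv : v ∉ H) (h : G.Adj u v) :
    ReachOutside G H u v := by
  refine ⟨h.toWalk, fun x hx => ?_⟩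
  rcases (by simpa using hx : x = u ∨ x = v) with rfl | rfl <;> assumption

end ReachOutside

theorem mem_compOf_self {u : V} (hu : u ∉ H) : u ∈ compOf G H u :=
  ⟨hu, .refl hu⟩

theorem isComp_compOf {u : V} (hu : u ∉ H) : IsComp G H (compOf G H u) :=
  ⟨⟨u, mem_compOf_self hu⟩, fun _ hw _ =>
    ⟨fun hv => ⟨hv.1, hw.2.symm.trans hv.2⟩, fun hv => ⟨hv.1, hw.2.trans hv.2⟩⟩⟩

theorem compOf_eq_of_adj {u v : V} (hu : u ∉ H) (hv : v ∉ H) (h : G.Adj u v) :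
    compOf G H u = compOf G H v := by
  ext w
  exact ⟨fun hw => ⟨hw.1, (ReachOutside.of_adj hv hu h.symm).trans hw.2⟩,
    fun hw => ⟨hw.1, (ReachOutside.of_adj hu hv h).trans hw.2⟩⟩

namespace IsComp

variable {D : Set V}

theorem compOf_eq (hD : IsComp G H D) {u : V} (hu : u ∈ D) : compOf G H u = D :=
  Set.ext fun v => (hD.2 u hu v).symm

theorem notMem (hD : IsComp G H D) {v : V} (hv : v ∈ D) : v ∉ H :=
  ((hD.2 v hv v).1 hv).1

theorem nbhdOf_subset (hD : IsComp G H D) : nbhdOf G D ⊆ H := by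
  rintro a ⟨haD, d, hd, had⟩
  by_contra ha
  exact haD ((hD.2 d hd a).2 ⟨ha, .of_adj (hD.notMem hd) ha had.symm⟩)

theorem mem_nbhdOf_of_adj (hD : IsComp G H D) {a d : V} (ha : a ∈ H) (hd : d ∈ D)
    (h : G.Adj a d) : a ∈ nbhdOf G D :=
  ⟨fun haD => hD.notMem haD ha, d, hd, h⟩

theorem mem_Dinf (hD : IsComp G H D) (hfin : D ∉ Dfin G H) : D ∈ Dinf G H :=
  ⟨hD, fun h => hfin ⟨hD, h⟩⟩

end IsComp

variable {η : Set V → V}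

theorem rho_of_mem {u : V} (h : u ∈ H) : rho G H η u = Sum.inl u := by
  simp [rho, h]

theorem rho_of_mem_Dfin {u : V} (h : u ∉ H) (hfin : compOf G H u ∈ Dfin G H) :
    rho G H η u = Sum.inr (compOf G H u) := by
  simp [rho, h, hfin]

theorem rho_of_notMem_Dfin {u : V} (h : u ∉ H) (hfin : compOf G H u ∉ Dfin G H) :
    rho G H η u = Sum.inl (η (compOf G H u)) := by
  simp [rho, h, hfin]

theorem mask_of_mem {u : V} (h : u ∈ H) : mask G H u = Sum.inl u := by
  simp [mask, h]

theorem mask_of_notMem {u : V} (h : u ∉ H) : mask G H u = Sum.inr (compOf G H u) := by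
  simp [mask, h]

theorem torso_adj_inl_of_adj {a b : V} (ha : a ∈ H) (hb : b ∈ H) (h : G.Adj a b) :
    (Torso G H η).Adj (Sum.inl a) (Sum.inl b) :=
  ⟨by simpa using G.ne_of_adj h, a, b, rho_of_mem ha, rho_of_mem hb, h⟩

theorem torso_adj_inr_of_mem_nbhdOf {D : Set V} (hD : D ∈ Dfin G H) {a : V}
    (ha : a ∈ nbhdOf G D) : (Torso G H η).Adj (Sum.inr D) (Sum.inl a) := by
  have haH := hD.1.nbhdOf_subset ha
  obtain ⟨-, d, hd, had⟩ := ha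
  have hdD := hD.1.compOf_eq hd
  refine ⟨Sum.inr_ne_inl, d, a, ?_, rho_of_mem haH, had.symm⟩
  rw [rho_of_mem_Dfin (hD.1.notMem hd) (hdD ▸ hD), hdD]

theorem torso_adj_of_mem_nbhdOf_Dinf (hη : EtaOK G H η) {D : Set V} (hD : D ∈ Dinf G H)
    {a b : V} (ha : a ∈ nbhdOf G D) (hb : b ∈ nbhdOf G D) (hab : a ≠ b) :
    (Torso G H η).Adj (Sum.inl a) (Sum.inl b) := by
  obtain ⟨D', hD', hN, hηD'⟩ := hη.2 D hD b hb
  obtain ⟨-, d, hd, had⟩ := hN ▸ ha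
  have hdD' := hD'.1.compOf_eq hd
  refine ⟨by simpa using hab, a, d, rho_of_mem (hD.1.nbhdOf_subset ha), ?_, had⟩
  rw [rho_of_notMem_Dfin (hD'.1.notMem hd) (hdD' ▸ fun h => hD'.2 h.2), hdD', hηD']

variable {f : ℕ → V}

theorem mem_compOf_of_forall_notMem (hadj : ∀ n, G.Adj (f n) (f (n + 1))) {a b : ℕ}
    (hab : a ≤ b) (hout : ∀ k, a ≤ k → k ≤ b → f k ∉ H) : f b ∈ compOf G H (f a) := by
  induction b, hab using Nat.le_induction with
  | base => exact mem_compOf_self (hout a le_rfl le_rfl)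
  | succ b hab ih =>
    have hb := hout b hab (by omega)
    have hb₁ := hout (b + 1) (by omega) le_rfl
    exact ⟨hb₁, (ih fun k h₁ h₂ => hout k h₁ (by omega)).2.trans (.of_adj hb hb₁ (hadj b))⟩

theorem mem_of_keepIdx_succ (hadj : ∀ n, G.Adj (f n) (f (n + 1))) {t : ℕ} (ht : f t ∉ H)
    (hkeep : keepIdx G H f (t + 1)) : f (t + 1) ∈ H := by
  by_contra h
  obtain h' | ⟨-, -, h0 | hmask⟩ := hkeep
  · exact h h'
  · omega
  · apply hmask
    rw [Nat.add_sub_cancel, mask_of_notMem ht, mask_of_notMem h, compOf_eq_of_adj ht h (hadj t)]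

theorem torso_adj_of_excursion (hη : EtaOK G H η) (hf : IsRay G f) {n t : ℕ} (hnt : n < t)
    (hn : f n ∈ H) (hout : ∀ k, n < k → k ≤ t → f k ∉ H) (ht : f (t + 1) ∈ H)
    (hinf : compOf G H (f (n + 1)) ∉ Dfin G H) :
    (Torso G H η).Adj (Sum.inl (f n)) (Sum.inl (f (t + 1))) := by
  have h₁ : f (n + 1) ∉ H := hout (n + 1) (by omega) (by omega)
  have hD : IsComp G H (compOf G H (f (n + 1))) := isComp_compOf h₁
  have htD : f t ∈ compOf G H (f (n + 1)) :=
    mem_compOf_of_forall_notMem hf.2 (by omega) fun k hk hkt => hout k (by omega) hkt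
  exact torso_adj_of_mem_nbhdOf_Dinf hη (hD.mem_Dinf hinf)
    (hD.mem_nbhdOf_of_adj hn (mem_compOf_self h₁) (hf.2 n))
    (hD.mem_nbhdOf_of_adj ht htD (hf.2 t).symm) (hf.1.ne (by omega))

theorem torso_adj_rho_of_keepIdx (hη : EtaOK G H η) (hf : IsRay G f) {n n' : ℕ}
    (hn : keepIdx G H f n) (hn' : keepIdx G H f n') (hlt : n < n')
    (hgap : ∀ k, n < k → k < n' → ¬ keepIdx G H f k) :
    (Torso G H η).Adj (rho G H η (f n)) (rho G H η (f n')) := by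
  obtain ⟨t, rfl⟩ : ∃ t, n' = t + 1 := ⟨n' - 1, by omega⟩
  have hout : ∀ k, n < k → k ≤ t → f k ∉ H := fun k h₁ h₂ hk => hgap k h₁ (by omega) (.inl hk)
  by_cases hnH : f n ∈ H
  · rw [rho_of_mem hnH]
    rcases (Nat.lt_succ_iff.1 hlt).eq_or_lt with rfl | hnt
    · by_cases ht₁ : f (n + 1) ∈ H
      · rw [rho_of_mem ht₁]
        exact torso_adj_inl_of_adj hnH ht₁ (hf.2 n)
      · obtain h | ⟨-, hfin, -⟩ := hn'
        · exact absurd h ht₁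
        rw [rho_of_mem_Dfin ht₁ hfin]
        exact (torso_adj_inr_of_mem_nbhdOf hfin ((isComp_compOf ht₁).mem_nbhdOf_of_adj hnH
          (mem_compOf_self ht₁) (hf.2 n))).symm
    · have ht₁ : f (t + 1) ∈ H := mem_of_keepIdx_succ hf.2 (hout t hnt le_rfl) hn'
      have h₁ : f (n + 1) ∉ H := hout (n + 1) (by omega) hnt
      rw [rho_of_mem ht₁]
      exact torso_adj_of_excursion hη hf hnt hnH hout ht₁ fun hfin => hgap (n + 1) (by omega)
        (by omega) (.inr ⟨h₁, hfin, .inr (by simp [mask_of_mem hnH, mask_of_notMem h₁])⟩)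
  · obtain h | ⟨-, hfin, -⟩ := hn
    · exact absurd h hnH
    have hD : IsComp G H (compOf G H (f n)) := isComp_compOf hnH
    have htD : f t ∈ compOf G H (f n) := mem_compOf_of_forall_notMem hf.2 (by omega)
      fun k h₁ h₂ => (Nat.eq_or_lt_of_le h₁).elim (· ▸ hnH) (hout k · h₂)
    have ht₁ : f (t + 1) ∈ H := mem_of_keepIdx_succ hf.2 (hD.notMem htD) hn'
    rw [rho_of_mem_Dfin hnH hfin, rho_of_mem ht₁]
    exact torso_adj_inr_of_mem_nbhdOf hfin (hD.mem_nbhdOf_of_adj ht₁ htD (hf.2 t).symm)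

theorem eq_of_keepIdx_of_rho_eq_inl {n : ℕ} {v : V} (hn : keepIdx G H f n)
    (h : rho G H η (f n) = Sum.inl v) : f n = v := by
  by_cases hH : f n ∈ H
  · rw [rho_of_mem hH] at h
    exact Sum.inl.inj h
  · obtain h' | ⟨-, hfin, -⟩ := hn
    · exact absurd h' hH
    rw [rho_of_mem_Dfin hH hfin] at h
    exact absurd h Sum.inr_ne_inl

theorem entry_of_keepIdx_of_rho_eq_inr (hadj : ∀ n, G.Adj (f n) (f (n + 1))) {n : ℕ}
    {D : Set V} (hn : keepIdx G H f n) (h : rho G H η (f n) = Sum.inr D) :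
    IsComp G H D ∧ (n = 0 ∨ ∃ k, f k ∈ nbhdOf G D ∧ k + 1 = n) := by
  have hH : f n ∉ H := fun hH => Sum.inl_ne_inr ((rho_of_mem hH).symm.trans h)
  obtain h' | ⟨-, hfin, -⟩ := id hn
  · exact absurd h' hH
  rw [rho_of_mem_Dfin hH hfin, Sum.inr.injEq] at h
  subst h
  refine ⟨isComp_compOf hH, ?_⟩
  cases n with
  | zero => exact .inl rfl
  | succ k =>
    have hk : f k ∈ H := by
      by_contra hk
      exact hH (mem_of_keepIdx_succ hadj hk hn)
    exact .inr ⟨k, (isComp_compOf hH).mem_nbhdOf_of_adj hk (mem_compOf_self hH) (hadj k), rfl⟩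

theorem finite_keepIdx_rho_eq (hadh : FiniteAdhesion G H) (hf : IsRay G f) (w : V ⊕ Set V) :
    {n | keepIdx G H f n ∧ rho G H η (f n) = w}.Finite := by
  cases w with
  | inl v =>
    exact Set.Subsingleton.finite fun a ha b hb => hf.1
      ((eq_of_keepIdx_of_rho_eq_inl ha.1 ha.2).trans (eq_of_keepIdx_of_rho_eq_inl hb.1 hb.2).symm)
  | inr D =>
    by_cases hD : IsComp G H D
    · refine ((((hadh D hD).preimage hf.1.injOn).image (· + 1)).insert 0).subset ?_
      rintro n ⟨hn, h⟩
      simpa using (entry_of_keepIdx_of_rho_eq_inr hf.2 hn h).2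
    · exact Set.finite_empty.subset fun n ⟨hn, h⟩ =>
        hD (entry_of_keepIdx_of_rho_eq_inr hf.2 hn h).1

end

/-- The `K`-projection of a tendril is a locally finite tour in the dominated
torso `K`: an infinite walk visiting each vertex only finitely many times. -/
theorem rayProj_locally_finite_tour {V : Type*} (G : SimpleGraph V) (H : Set V)
    (η : Set V → V) (hadh : FiniteAdhesion G H) (hη : EtaOK G H η)
    (f : ℕ → V) (hf : IsTendril G H f) :
    (∀ m : ℕ, (Torso G H η).Adj (rayProj G H η f m) (rayProj G H η f (m + 1))) ∧
    (∀ w : V ⊕ Set V, {m : ℕ | rayProj G H η f m = w}.Finite) := by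
  obtain ⟨hray, hHinf⟩ := hf
  have hkeep : {n | keepIdx G H f n}.Infinite := hHinf.mono fun _ => .inl
  refine ⟨fun m => ?_, fun w => ?_⟩
  · exact torso_adj_rho_of_keepIdx hη hray (Nat.nth_mem_of_infinite hkeep m)
      (Nat.nth_mem_of_infinite hkeep (m + 1)) ((Nat.nth_lt_nth hkeep).2 m.lt_succ_self)
      fun k h₁ h₂ hk => (Nat.le_nth_of_lt_nth_succ h₂ hk).not_gt h₁
  · exact ((finite_keepIdx_rho_eq hadh hray w).preimage (Nat.nth_injective hkeep).injOn).subset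
      fun m hm => ⟨Nat.nth_mem_of_infinite hkeep m, hm⟩
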